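/- arXiv:2504.01042 — 5 statements merged into one kernel-verified Lean document; each statement's English description precedes it below -/
import Mathlib

section
/- If φ is a bounded analytic function on the unit disk, then T_φ W = W T_{φ(z^2)}, where T_φ is the Toeplitz operator on the Bergman space and W is the slant operator. -/
/-!
Both sides are continuous and the monomials span a dense subspace, so it suffices to compare
them on `z^k`. Since `T_{φ(z²)} z^k = Σ aₙ z^{2n+k}` only shifts `z^k` by even powers, `W` maps
it to `Σ aₙ z^{n+m} = T_φ z^m` when `k = 2m`, and kills it termwise when `k` is odd, which is
exactly `T_φ (W z^k)`.
-/

section Slant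

variable {R E F : Type*} [Semiring R]
  [TopologicalSpace E] [AddCommMonoid E] [Module R E]
  [TopologicalSpace F] [AddCommMonoid F] [Module R F]
  {W : E →L[R] F} {e : ℕ → E} {f : ℕ → F} {a : ℕ → R}

theorem hasSum_slant_of_even_shift (hW0 : ∀ n, W (e (2 * n)) = f n) {m : ℕ} {x : E}
    (hx : HasSum (fun n => a n • e (2 * n + 2 * m)) x) :
    HasSum (fun n => a n • f (n + m)) (W x) := by
  have hWx := hx.mapL W
  simp only [map_smul] at hWx
  simpa only [← mul_add, hW0] using hWx

theorem slant_eq_zero_of_odd_shift [T2Space F] (hW1 : ∀ n, W (e (2 * n + 1)) = 0) {m : ℕ}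
    {x : E} (hx : HasSum (fun n => a n • e (2 * n + (2 * m + 1))) x) :
    W x = 0 := by
  have hWx := hx.mapL W
  simp only [map_smul, ← add_assoc, ← mul_add, hW1, smul_zero] at hWx
  exact hWx.unique hasSum_zero

theorem toeplitz_slant_apply_eq_slant_toeplitz [T2Space F]
    (hW0 : ∀ n, W (e (2 * n)) = f n) (hW1 : ∀ n, W (e (2 * n + 1)) = 0)
    {T : F →L[R] F} {T2 : E →L[R] E}
    (hT : ∀ k, HasSum (fun n => a n • f (n + k)) (T (f k)))
    (hT2 : ∀ k, HasSum (fun n => a n • e (2 * n + k)) (T2 (e k))) (k : ℕ) :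
    T (W (e k)) = W (T2 (e k)) := by
  obtain ⟨m, rfl | rfl⟩ := Nat.even_or_odd' k
  · rw [hW0]
    exact (hT m).unique (hasSum_slant_of_even_shift hW0 (hT2 (2 * m)))
  · rw [hW1, map_zero, slant_eq_zero_of_odd_shift hW1 (hT2 (2 * m + 1))]

end Slant

theorem toeplitz_comp_slant_general
    {H : Type*} [NormedAddCommGroup H] [InnerProductSpace ℂ H]
    (e : ℕ → H)
    (hdense : (Submodule.span ℂ (Set.range e)).topologicalClosure = ⊤)
    (W : H →L[ℂ] H)
    (hW0 : ∀ n : ℕ, W (e (2 * n)) = e n)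
    (hW1 : ∀ n : ℕ, W (e (2 * n + 1)) = 0)
    (a : ℕ → ℂ)
    (T T2 : H →L[ℂ] H)
    (hT : ∀ k : ℕ, HasSum (fun n : ℕ => a n • e (n + k)) (T (e k)))
    (hT2 : ∀ k : ℕ, HasSum (fun n : ℕ => a n • e (2 * n + k)) (T2 (e k))) :
    T.comp W = W.comp T2 := by
  refine ContinuousLinearMap.ext_on
    ((Submodule.dense_iff_topologicalClosure_eq_top).2 hdense) ?_
  rintro _ ⟨k, rfl⟩
  exact toeplitz_slant_apply_eq_slant_toeplitz hW0 hW1 hT hT2 k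

/-- If `φ` is a bounded analytic function on the unit disk with Taylor
coefficients `a`, then on the Bergman space (modeled as a complex Hilbert space
`H` with monomials `e n = z^n`, `⟪z^j, z^k⟫ = δ_{jk}/(j+1)`, dense span) one has
`T_φ W = W T_{φ(z²)}`, where `T_φ` and `T_{φ(z²)}` are the Toeplitz operators,
characterized on monomials by `T_φ z^k = Σ_n a_n z^{n+k}` and
`T_{φ(z²)} z^k = Σ_n a_n z^{2n+k}`, and `W` is the slant operator. -/
theorem toeplitz_comp_slant
    {H : Type*} [NormedAddCommGroup H] [InnerProductSpace ℂ H] [CompleteSpace H]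
    (e : ℕ → H)
    (he : ∀ j k : ℕ, (inner ℂ (e j) (e k) : ℂ) = if j = k then 1 / ((j : ℂ) + 1) else 0)
    (hdense : (Submodule.span ℂ (Set.range e)).topologicalClosure = ⊤)
    (W : H →L[ℂ] H)
    (hW0 : ∀ n : ℕ, W (e (2 * n)) = e n)
    (hW1 : ∀ n : ℕ, W (e (2 * n + 1)) = 0)
    (φ : ℂ → ℂ) (a : ℕ → ℂ) (C : ℝ)
    (hφ : ∀ z ∈ Metric.ball (0 : ℂ) 1, HasSum (fun n : ℕ => a n * z ^ n) (φ z))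
    (hφbd : ∀ z ∈ Metric.ball (0 : ℂ) 1, ‖φ z‖ ≤ C)
    (T T2 : H →L[ℂ] H)
    (hT : ∀ k : ℕ, HasSum (fun n : ℕ => a n • e (n + k)) (T (e k)))
    (hT2 : ∀ k : ℕ, HasSum (fun n : ℕ => a n • e (2 * n + k)) (T2 (e k))) :
    T.comp W = W.comp T2 :=
  toeplitz_comp_slant_general e hdense W hW0 hW1 a T T2 hT hT2
end

section
/- Let φ, ψ be bounded analytic functions on the unit disk and let a be a nonzero real number. If the slant Toeplitz operators B_f and B_g with symbols f = a z̄ + φ and g = z̄ + ψ commute on the Bergman space, then φ = a ψ, and hence f = a g. -/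
/-! Write `φ - a₀ ψ = ∑ dₙ zⁿ`. Since `B_f = a₀ B_g + W T_{φ - a₀ψ}`, the operator `W T_d` commutes
with `B_g`, and we show `dₙ = 0` by strong induction, pairing both products applied to `z^{3n+2}`
with `zⁿ`. If `d` vanishes below `n`, then `⟪zⁿ, W T_d z^m⟫ = d_{2n-m}/(n+1)` vanishes for `m > n`,
while `B_g z^{3n+2}` only involves `z^m` with `m > n`; so `⟪zⁿ, W T_d B_g z^{3n+2}⟫ = 0`. On the
other side `B_g z^m` has no `zⁿ`-component for `m > 2n+1`, so in `W T_d z^{3n+2}` only the term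
`dₙ z^{2n+1}` counts, and it meets the `z̄`-part of `B_g`:
`⟪zⁿ, B_g W T_d z^{3n+2}⟫ = dₙ (2n+1)/((2n+2)(n+1))`. -/

open ContinuousLinearMap
open scoped InnerProductSpace

section

variable {H : Type*} [NormedAddCommGroup H] [InnerProductSpace ℂ H]

def IsBergmanMonomials (e : ℕ → H) : Prop :=
  ∀ j k : ℕ, ⟪e j, e k⟫_ℂ = if j = k then 1 / ((j : ℂ) + 1) else 0

def IsSlant (e : ℕ → H) (W : H →L[ℂ] H) : Prop :=
  ∀ n, W (e (2 * n)) = e n ∧ W (e (2 * n + 1)) = 0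

def IsToeplitzConjZ (e : ℕ → H) (Tc : H →L[ℂ] H) : Prop :=
  Tc (e 0) = 0 ∧ ∀ k : ℕ, Tc (e (k + 1)) = (((k : ℂ) + 1) / ((k : ℂ) + 2)) • e k

def IsAnalyticToeplitz (e : ℕ → H) (c : ℕ → ℂ) (T : H →L[ℂ] H) : Prop :=
  ∀ k, HasSum (fun n => c n • e (n + k)) (T (e k))

variable {e : ℕ → H} {W Tc S T : H →L[ℂ] H} {b c d : ℕ → ℂ}
  {F : Type*} [NormedAddCommGroup F] [NormedSpace ℂ F]

namespace IsAnalyticToeplitz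

theorem sub (hS : IsAnalyticToeplitz e c S) (hT : IsAnalyticToeplitz e d T) :
    IsAnalyticToeplitz e (c - d) (S - T) := fun k => by
  simpa only [Pi.sub_apply, sub_smul, sub_apply] using (hS k).sub (hT k)

theorem const_smul (hT : IsAnalyticToeplitz e c T) (z : ℂ) :
    IsAnalyticToeplitz e (z • c) (z • T) := fun k => by
  simpa only [Pi.smul_apply, smul_assoc, smul_apply] using (hT k).const_smul z

theorem map_apply (hT : IsAnalyticToeplitz e c T) (A : H →L[ℂ] F) {k : ℕ} (i₀ : ℕ)
    (hA : ∀ i ≠ i₀, c i • A (e (i + k)) = 0) : A (T (e k)) = c i₀ • A (e (i₀ + k)) := by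
  have hsum := A.hasSum (hT k)
  simp only [map_smul] at hsum
  exact hsum.unique (hasSum_single i₀ hA)

theorem map_apply_eq_zero (hT : IsAnalyticToeplitz e c T) (A : H →L[ℂ] F) {k : ℕ}
    (hA : ∀ j ≥ k, A (e j) = 0) : A (T (e k)) = 0 := by
  rw [hT.map_apply A 0 fun i _ => by rw [hA _ (by omega), smul_zero], hA _ (by omega),
    smul_zero]

end IsAnalyticToeplitz

namespace IsSlant

theorem inner_apply (he : IsBergmanMonomials e) (hW : IsSlant e W) (m j : ℕ) :
    ⟪e m, W (e j)⟫_ℂ = if j = 2 * m then 1 / ((m : ℂ) + 1) else 0 := by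
  obtain ⟨t, rfl | rfl⟩ := Nat.even_or_odd' j
  · rw [(hW t).1, he]
    by_cases h : m = t
    · simp [h]
    · rw [if_neg h, if_neg (by omega)]
  · rw [(hW t).2, inner_zero_right, if_neg (by omega)]

theorem map_apply_eq_zero (hW : IsSlant e W) (A : H →L[ℂ] F) {M : ℕ}
    (hA : ∀ m ≥ M, A (e m) = 0) {j : ℕ} (hj : 2 * M ≤ j + 1) : A (W (e j)) = 0 := by
  obtain ⟨t, rfl | rfl⟩ := Nat.even_or_odd' j
  · rw [(hW t).1, hA t (by omega)]
  · rw [(hW t).2, map_zero]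

theorem inner_comp_toeplitz_apply (he : IsBergmanMonomials e) (hW : IsSlant e W)
    (hT : IsAnalyticToeplitz e c T) (m j : ℕ) :
    ⟪e m, W (T (e j))⟫_ℂ = if j ≤ 2 * m then c (2 * m - j) / ((m : ℂ) + 1) else 0 := by
  let A := (innerSL ℂ (e m)).comp W
  have hA (i : ℕ) : A (e i) = if i = 2 * m then 1 / ((m : ℂ) + 1) else 0 :=
    hW.inner_apply he m i
  change A (T (e j)) = _
  split_ifs with hj
  · rw [hT.map_apply A (2 * m - j) fun i hi => by rw [hA, if_neg (by omega), smul_zero], hA,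
      if_pos (by omega), smul_eq_mul, mul_one_div]
  · exact hT.map_apply_eq_zero A fun i hi => by rw [hA, if_neg (by omega)]

theorem inner_comp_conjZ_apply (he : IsBergmanMonomials e) (hW : IsSlant e W)
    (hTc : IsToeplitzConjZ e Tc) (m j : ℕ) :
    ⟪e m, W (Tc (e j))⟫_ℂ =
      if j = 2 * m + 1 then (2 * m + 1) / ((2 * m + 2) * ((m : ℂ) + 1)) else 0 := by
  cases j with
  | zero => rw [hTc.1, map_zero, inner_zero_right, if_neg (by omega)]
  | succ t =>
    rw [hTc.2, map_smul, inner_smul_right, hW.inner_apply he]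
    by_cases ht : t = 2 * m
    · subst ht
      rw [if_pos rfl, if_pos rfl]
      push_cast
      field_simp
    · rw [if_neg ht, if_neg (by omega), mul_zero]

end IsSlant

theorem inner_slant_conjZ_add_toeplitz_apply (he : IsBergmanMonomials e) (hW : IsSlant e W)
    (hTc : IsToeplitzConjZ e Tc) (hS : IsAnalyticToeplitz e b S) (m j : ℕ) :
    ⟪e m, (W ∘L (Tc + S)) (e j)⟫_ℂ =
      (if j = 2 * m + 1 then (2 * m + 1) / ((2 * m + 2) * ((m : ℂ) + 1)) else 0) +
        if j ≤ 2 * m then b (2 * m - j) / ((m : ℂ) + 1) else 0 := by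
  rw [comp_apply, add_apply, map_add, inner_add_right, hW.inner_comp_conjZ_apply he hTc,
    hW.inner_comp_toeplitz_apply he hS]

theorem inner_slant_toeplitz_slant_conjZ_add_toeplitz_eq_zero (he : IsBergmanMonomials e)
    (hW : IsSlant e W) (hTc : IsToeplitzConjZ e Tc) (hS : IsAnalyticToeplitz e b S)
    (hT : IsAnalyticToeplitz e d T) {n : ℕ} (hd : ∀ i < n, d i = 0) :
    ⟪e n, (W ∘L T) ((W ∘L (Tc + S)) (e (3 * n + 2)))⟫_ℂ = 0 := by
  let A := (innerSL ℂ (e n)).comp ((W ∘L T) ∘L W)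
  have hA : ∀ j ≥ 2 * n + 1, A (e j) = 0 := fun j hj =>
    hW.map_apply_eq_zero ((innerSL ℂ (e n)).comp (W ∘L T)) (M := n + 1) (fun m hm => by
      change ⟪e n, W (T (e m))⟫_ℂ = 0
      rw [hW.inner_comp_toeplitz_apply he hT]
      split_ifs
      · rw [hd _ (by omega), zero_div]
      · rfl) (by omega)
  change A (Tc (e (3 * n + 1 + 1)) + S (e (3 * n + 2))) = 0
  rw [map_add, hTc.2, map_smul, hA _ (by omega), smul_zero, zero_add]
  exact hS.map_apply_eq_zero A fun j hj => hA j (by omega)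

theorem inner_slant_conjZ_add_toeplitz_slant_toeplitz (he : IsBergmanMonomials e)
    (hW : IsSlant e W) (hTc : IsToeplitzConjZ e Tc) (hS : IsAnalyticToeplitz e b S)
    (hT : IsAnalyticToeplitz e d T) {n : ℕ} (hd : ∀ i < n, d i = 0) :
    ⟪e n, (W ∘L (Tc + S)) ((W ∘L T) (e (3 * n + 2)))⟫_ℂ =
      d n * ((2 * n + 1) / ((2 * n + 2) * ((n : ℂ) + 1))) := by
  let B := (innerSL ℂ (e n)).comp ((W ∘L (Tc + S)) ∘L W)
  have hB : ∀ j ≥ 4 * n + 3, B (e j) = 0 := fun j hj =>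
    hW.map_apply_eq_zero ((innerSL ℂ (e n)).comp (W ∘L (Tc + S))) (M := 2 * n + 2)
      (fun m hm => by
        change ⟪e n, (W ∘L (Tc + S)) (e m)⟫_ℂ = 0
        rw [inner_slant_conjZ_add_toeplitz_apply he hW hTc hS, if_neg (by omega),
          if_neg (by omega), add_zero]) (by omega)
  change B (T (e (3 * n + 2))) = _
  rw [hT.map_apply B n fun i hi => ?_]
  · rw [show n + (3 * n + 2) = 2 * (2 * n + 1) by ring]
    change d n • ⟪e n, (W ∘L (Tc + S)) (W (e (2 * (2 * n + 1))))⟫_ℂ = _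
    rw [(hW _).1, inner_slant_conjZ_add_toeplitz_apply he hW hTc hS, if_pos rfl,
      if_neg (by omega), add_zero, smul_eq_mul]
  · rcases Nat.lt_or_gt_of_ne hi with hi | hi
    · rw [hd i hi, zero_smul]
    · rw [hB _ (by omega), smul_zero]

theorem toeplitz_coeff_eq_zero_of_commute (he : IsBergmanMonomials e) (hW : IsSlant e W)
    (hTc : IsToeplitzConjZ e Tc) (hS : IsAnalyticToeplitz e b S) (hT : IsAnalyticToeplitz e d T)
    (hcomm : Commute (W ∘L T) (W ∘L (Tc + S))) (n : ℕ) : d n = 0 := by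
  induction n using Nat.strong_induction_on with
  | _ n ih =>
    have key : ⟪e n, (W ∘L T) ((W ∘L (Tc + S)) (e (3 * n + 2)))⟫_ℂ =
        ⟪e n, (W ∘L (Tc + S)) ((W ∘L T) (e (3 * n + 2)))⟫_ℂ :=
      congr(⟪e n, $(hcomm.eq) (e (3 * n + 2))⟫_ℂ)
    rw [inner_slant_toeplitz_slant_conjZ_add_toeplitz_eq_zero he hW hTc hS hT ih,
      inner_slant_conjZ_add_toeplitz_slant_toeplitz he hW hTc hS hT ih] at key
    have hne : (2 * n + 1) / ((2 * n + 2) * ((n : ℂ) + 1)) ≠ 0 := by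
      apply div_ne_zero <;> norm_cast
    exact (mul_eq_zero.mp key.symm).resolve_right hne

end

theorem commuting_slant_toeplitz_conj_z_general
    {H : Type*} [NormedAddCommGroup H] [InnerProductSpace ℂ H]
    (e : ℕ → H)
    (he : ∀ j k : ℕ, (inner ℂ (e j) (e k) : ℂ) = if j = k then 1 / ((j : ℂ) + 1) else 0)
    (W : H →L[ℂ] H)
    (hW0 : ∀ n : ℕ, W (e (2 * n)) = e n)
    (hW1 : ∀ n : ℕ, W (e (2 * n + 1)) = 0)
    (φ ψ : ℂ → ℂ) (a b : ℕ → ℂ)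
    (hφ : ∀ z ∈ Metric.ball (0 : ℂ) 1, HasSum (fun n : ℕ => a n * z ^ n) (φ z))
    (hψ : ∀ z ∈ Metric.ball (0 : ℂ) 1, HasSum (fun n : ℕ => b n * z ^ n) (ψ z))
    (Tφ Tψ Tc : H →L[ℂ] H)
    (hTφ : ∀ k : ℕ, HasSum (fun n : ℕ => a n • e (n + k)) (Tφ (e k)))
    (hTψ : ∀ k : ℕ, HasSum (fun n : ℕ => b n • e (n + k)) (Tψ (e k)))
    (hTc0 : Tc (e 0) = 0)
    (hTc : ∀ k : ℕ, Tc (e (k + 1)) = (((k : ℂ) + 1) / ((k : ℂ) + 2)) • e k)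
    (a₀ : ℝ)
    (hcomm : (W.comp ((a₀ : ℂ) • Tc + Tφ)).comp (W.comp (Tc + Tψ))
      = (W.comp (Tc + Tψ)).comp (W.comp ((a₀ : ℂ) • Tc + Tφ))) :
    (∀ z ∈ Metric.ball (0 : ℂ) 1, φ z = (a₀ : ℂ) * ψ z) ∧
    (∀ z ∈ Metric.ball (0 : ℂ) 1,
      (a₀ : ℂ) * (starRingEnd ℂ) z + φ z
        = (a₀ : ℂ) * ((starRingEnd ℂ) z + ψ z)) := by
  have hsplit : W ∘L ((a₀ : ℂ) • Tc + Tφ) =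
      (a₀ : ℂ) • W ∘L (Tc + Tψ) + W ∘L (Tφ - (a₀ : ℂ) • Tψ) := by
    ext x
    simp only [comp_apply, add_apply, sub_apply, smul_apply, map_add, map_sub, map_smul]
    module
  have hcomm' : Commute (W ∘L (Tφ - (a₀ : ℂ) • Tψ)) (W ∘L (Tc + Tψ)) := by
    have h : Commute (W ∘L ((a₀ : ℂ) • Tc + Tφ)) (W ∘L (Tc + Tψ)) := hcomm
    rw [hsplit] at h
    simpa only [add_sub_cancel_left] using h.sub_left ((Commute.refl _).smul_left (a₀ : ℂ))
  have hcoef (n : ℕ) : a n = a₀ * b n := sub_eq_zero.mp <|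
    toeplitz_coeff_eq_zero_of_commute he (fun n => ⟨hW0 n, hW1 n⟩) ⟨hTc0, hTc⟩ hTψ
      ((show IsAnalyticToeplitz e a Tφ from hTφ).sub
        ((show IsAnalyticToeplitz e b Tψ from hTψ).const_smul (a₀ : ℂ))) hcomm' n
  have hφψ (z : ℂ) (hz : z ∈ Metric.ball (0 : ℂ) 1) : φ z = a₀ * ψ z := by
    refine (hφ z hz).unique ?_
    simpa only [hcoef, mul_assoc] using (hψ z hz).mul_left (a₀ : ℂ)
  exact ⟨hφψ, fun z hz => by rw [hφψ z hz, mul_add]⟩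

/-- Let `φ, ψ` be bounded analytic functions on the unit disk (with Taylor
coefficients `a`, `b`) and `a₀` a nonzero real number.  On the Bergman space
(modeled as a complex Hilbert space `H` with monomials `e n = z^n`,
`⟪z^j, z^k⟫ = δ_{jk}/(j+1)`, dense span) with slant operator `W` and Toeplitz
operators `Tφ = T_φ`, `Tψ = T_ψ`, `Tc = T_z̄` characterized on monomials, if
the slant Toeplitz operators `B_f = W(a₀ T_z̄ + T_φ)` and
`B_g = W(T_z̄ + T_ψ)` with symbols `f = a₀ z̄ + φ`, `g = z̄ + ψ` commute,
then `φ = a₀ ψ` and hence `f = a₀ g` on the disk. -/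
theorem commuting_slant_toeplitz_conj_z
    {H : Type*} [NormedAddCommGroup H] [InnerProductSpace ℂ H] [CompleteSpace H]
    (e : ℕ → H)
    (he : ∀ j k : ℕ, (inner ℂ (e j) (e k) : ℂ) = if j = k then 1 / ((j : ℂ) + 1) else 0)
    (hdense : (Submodule.span ℂ (Set.range e)).topologicalClosure = ⊤)
    (W : H →L[ℂ] H)
    (hW0 : ∀ n : ℕ, W (e (2 * n)) = e n)
    (hW1 : ∀ n : ℕ, W (e (2 * n + 1)) = 0)
    (φ ψ : ℂ → ℂ) (a b : ℕ → ℂ) (Cφ Cψ : ℝ)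
    (hφ : ∀ z ∈ Metric.ball (0 : ℂ) 1, HasSum (fun n : ℕ => a n * z ^ n) (φ z))
    (hψ : ∀ z ∈ Metric.ball (0 : ℂ) 1, HasSum (fun n : ℕ => b n * z ^ n) (ψ z))
    (hφbd : ∀ z ∈ Metric.ball (0 : ℂ) 1, ‖φ z‖ ≤ Cφ)
    (hψbd : ∀ z ∈ Metric.ball (0 : ℂ) 1, ‖ψ z‖ ≤ Cψ)
    (Tφ Tψ Tc : H →L[ℂ] H)
    (hTφ : ∀ k : ℕ, HasSum (fun n : ℕ => a n • e (n + k)) (Tφ (e k)))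
    (hTψ : ∀ k : ℕ, HasSum (fun n : ℕ => b n • e (n + k)) (Tψ (e k)))
    (hTc0 : Tc (e 0) = 0)
    (hTc : ∀ k : ℕ, Tc (e (k + 1)) = (((k : ℂ) + 1) / ((k : ℂ) + 2)) • e k)
    (a₀ : ℝ) (ha₀ : a₀ ≠ 0)
    (hcomm : (W.comp ((a₀ : ℂ) • Tc + Tφ)).comp (W.comp (Tc + Tψ))
      = (W.comp (Tc + Tψ)).comp (W.comp ((a₀ : ℂ) • Tc + Tφ))) :
    (∀ z ∈ Metric.ball (0 : ℂ) 1, φ z = (a₀ : ℂ) * ψ z) ∧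
    (∀ z ∈ Metric.ball (0 : ℂ) 1,
      (a₀ : ℂ) * (starRingEnd ℂ) z + φ z
        = (a₀ : ℂ) * ((starRingEnd ℂ) z + ψ z)) :=
  commuting_slant_toeplitz_conj_z_general e he W hW0 hW1 φ ψ a b hφ hψ Tφ Tψ Tc hTφ hTψ hTc0 hTc a₀
    hcomm
end

section
/- The slant Toeplitz operators B_{z + z̄^2} and B_{z + z̄} on the Bergman space do not commute: B_{z + z̄^2} B_{z + z̄} ≠ B_{z + z̄} B_{z + z̄^2}. -/
/-! Both products already differ on the monomial `z`: `B_{z+z̄}` sends `z` to `z + 1/2` and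
`B_{z+z̄²}` sends `z` to `z` and kills `1`, so `B_{z+z̄²} B_{z+z̄} z = z` whereas
`B_{z+z̄} B_{z+z̄²} z = z + 1/2`. -/

section SlantToeplitz

variable {H : Type*} [NormedAddCommGroup H] [InnerProductSpace ℂ H] {e : ℕ → H}
  {W Tz Tc1 Tc2 : H →L[ℂ] H}

lemma slant_z_add_zbar_apply_one (hW0 : ∀ n : ℕ, W (e (2 * n)) = e n)
    (hTz : ∀ k : ℕ, Tz (e k) = e (k + 1))
    (hTc1 : ∀ k : ℕ, Tc1 (e k)
      = if 1 ≤ k then ((k : ℂ) / ((k : ℂ) + 1)) • e (k - 1) else 0) :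
    W ((Tz + Tc1) (e 1)) = e 1 + (2⁻¹ : ℂ) • e 0 := by
  have hTc1_one : Tc1 (e 1) = (2⁻¹ : ℂ) • e 0 := by
    rw [hTc1 1]
    norm_num
  have hW_two : W (e 2) = e 1 := hW0 1
  have hW_zero : W (e 0) = e 0 := hW0 0
  rw [add_apply, hTz, hTc1_one, map_add, map_smul, hW_two, hW_zero]

lemma slant_z_add_zbar_sq_apply_zero (hW1 : ∀ n : ℕ, W (e (2 * n + 1)) = 0)
    (hTz : ∀ k : ℕ, Tz (e k) = e (k + 1))
    (hTc2 : ∀ k : ℕ, Tc2 (e k)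
      = if 2 ≤ k then (((k : ℂ) - 1) / ((k : ℂ) + 1)) • e (k - 2) else 0) :
    W ((Tz + Tc2) (e 0)) = 0 := by
  rw [add_apply, hTz, hTc2 0, if_neg (by norm_num), add_zero]
  exact hW1 0

lemma slant_z_add_zbar_sq_apply_one (hW0 : ∀ n : ℕ, W (e (2 * n)) = e n)
    (hTz : ∀ k : ℕ, Tz (e k) = e (k + 1))
    (hTc2 : ∀ k : ℕ, Tc2 (e k)
      = if 2 ≤ k then (((k : ℂ) - 1) / ((k : ℂ) + 1)) • e (k - 2) else 0) :
    W ((Tz + Tc2) (e 1)) = e 1 := by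
  rw [add_apply, hTz, hTc2 1, if_neg (by norm_num), add_zero]
  exact hW0 1

end SlantToeplitz

theorem slant_toeplitz_z_zbar_sq_not_commute_general
    {H : Type*} [NormedAddCommGroup H] [InnerProductSpace ℂ H]
    (e : ℕ → H)
    (he : ∀ j k : ℕ, (inner ℂ (e j) (e k) : ℂ) = if j = k then 1 / ((j : ℂ) + 1) else 0)
    (W : H →L[ℂ] H)
    (hW0 : ∀ n : ℕ, W (e (2 * n)) = e n)
    (hW1 : ∀ n : ℕ, W (e (2 * n + 1)) = 0)
    (Tz Tc1 Tc2 : H →L[ℂ] H)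
    (hTz : ∀ k : ℕ, Tz (e k) = e (k + 1))
    (hTc1 : ∀ k : ℕ, Tc1 (e k)
      = if 1 ≤ k then (((k : ℂ)) / ((k : ℂ) + 1)) • e (k - 1) else 0)
    (hTc2 : ∀ k : ℕ, Tc2 (e k)
      = if 2 ≤ k then (((k : ℂ) - 1) / ((k : ℂ) + 1)) • e (k - 2) else 0) :
    (W.comp (Tz + Tc2)).comp (W.comp (Tz + Tc1))
      ≠ (W.comp (Tz + Tc1)).comp (W.comp (Tz + Tc2)) := by
  intro h
  have lhs : W ((Tz + Tc2) (W ((Tz + Tc1) (e 1)))) = e 1 := by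
    rw [slant_z_add_zbar_apply_one hW0 hTz hTc1, map_add, map_smul, map_add, map_smul,
      slant_z_add_zbar_sq_apply_one hW0 hTz hTc2, slant_z_add_zbar_sq_apply_zero hW1 hTz hTc2,
      smul_zero, add_zero]
  have rhs : W ((Tz + Tc1) (W ((Tz + Tc2) (e 1)))) = e 1 + (2⁻¹ : ℂ) • e 0 := by
    rw [slant_z_add_zbar_sq_apply_one hW0 hTz hTc2, slant_z_add_zbar_apply_one hW0 hTz hTc1]
  have he_zero : e 0 ≠ 0 := by
    intro h0
    simpa [h0] using he 0 0
  have h_one := congrArg (fun T : H →L[ℂ] H => T (e 1)) h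
  simp only [ContinuousLinearMap.comp_apply, lhs, rhs, left_eq_add, smul_eq_zero] at h_one
  exact h_one.elim (by norm_num) he_zero

/-- The slant Toeplitz operators `B_{z+z̄²} = W(T_z + T_{z̄²})` and
`B_{z+z̄} = W(T_z + T_{z̄})` on the Bergman space (modeled as a complex
Hilbert space `H` with monomials `e n = z^n`, `⟪z^j, z^k⟫ = δ_{jk}/(j+1)`,
dense span; `W` the slant operator and `T_z, T_{z̄}, T_{z̄²}` the Toeplitz
operators characterized on monomials) do not commute. -/
theorem slant_toeplitz_z_zbar_sq_not_commute
    {H : Type*} [NormedAddCommGroup H] [InnerProductSpace ℂ H] [CompleteSpace H]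
    (e : ℕ → H)
    (he : ∀ j k : ℕ, (inner ℂ (e j) (e k) : ℂ) = if j = k then 1 / ((j : ℂ) + 1) else 0)
    (hdense : (Submodule.span ℂ (Set.range e)).topologicalClosure = ⊤)
    (W : H →L[ℂ] H)
    (hW0 : ∀ n : ℕ, W (e (2 * n)) = e n)
    (hW1 : ∀ n : ℕ, W (e (2 * n + 1)) = 0)
    (Tz Tc1 Tc2 : H →L[ℂ] H)
    (hTz : ∀ k : ℕ, Tz (e k) = e (k + 1))
    (hTc1 : ∀ k : ℕ, Tc1 (e k)
      = if 1 ≤ k then (((k : ℂ)) / ((k : ℂ) + 1)) • e (k - 1) else 0)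
    (hTc2 : ∀ k : ℕ, Tc2 (e k)
      = if 2 ≤ k then (((k : ℂ) - 1) / ((k : ℂ) + 1)) • e (k - 2) else 0) :
    (W.comp (Tz + Tc2)).comp (W.comp (Tz + Tc1))
      ≠ (W.comp (Tz + Tc1)).comp (W.comp (Tz + Tc2)) :=
  slant_toeplitz_z_zbar_sq_not_commute_general e he W hW0 hW1 Tz Tc1 Tc2 hTz hTc1 hTc2
end

section
/- The slant Toeplitz operators B_{z + z̄^3} and B_{z + z̄} on the Bergman space do not commute: B_{z + z̄^3} B_{z + z̄} ≠ B_{z + z̄} B_{z + z̄^3}. -/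
/-! Evaluate both products at `z = e 1`. Since `B_{z+z̄} z = z + 1/2`, `B_{z+z̄³} z = z` and
`B_{z+z̄³} 1 = 0`, the product `B_{z+z̄³} B_{z+z̄}` sends `z` to `z`, whereas `B_{z+z̄} B_{z+z̄³}`
sends it to `z + 1/2`. They would agree only if `1 = e 0` vanished, but `‖1‖² = 1`. -/

theorem slant_toeplitz_z_zbar_cube_not_commute_general
    {H : Type*} [NormedAddCommGroup H] [InnerProductSpace ℂ H]
    (e : ℕ → H)
    (he : ∀ j k : ℕ, (inner ℂ (e j) (e k) : ℂ) = if j = k then 1 / ((j : ℂ) + 1) else 0)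
    (W : H →L[ℂ] H)
    (hW0 : ∀ n : ℕ, W (e (2 * n)) = e n)
    (hW1 : ∀ n : ℕ, W (e (2 * n + 1)) = 0)
    (Tz Tc1 Tc3 : H →L[ℂ] H)
    (hTz : ∀ k : ℕ, Tz (e k) = e (k + 1))
    (hTc1 : ∀ k : ℕ, Tc1 (e k)
      = if 1 ≤ k then (((k : ℂ)) / ((k : ℂ) + 1)) • e (k - 1) else 0)
    (hTc3 : ∀ k : ℕ, Tc3 (e k)
      = if 3 ≤ k then (((k : ℂ) - 2) / ((k : ℂ) + 1)) • e (k - 3) else 0) :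
    (W.comp (Tz + Tc3)).comp (W.comp (Tz + Tc1))
      ≠ (W.comp (Tz + Tc1)).comp (W.comp (Tz + Tc3)) := by
  have he0 : e 0 ≠ 0 := fun h0 => by simpa [h0] using he 0 0
  have hW_two : W (e 2) = e 1 := hW0 1
  have hBzbar_e1 : W ((Tz + Tc1) (e 1)) = e 1 + (1 / 2 : ℂ) • e 0 := by
    have hTc1_e1 : Tc1 (e 1) = (1 / 2 : ℂ) • e 0 := by norm_num [hTc1]
    simp [hTz, hTc1_e1, hW0 0, hW_two]
  have hBzbar3_e1 : W ((Tz + Tc3) (e 1)) = e 1 := by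
    simp [hTz, hTc3, hW_two]
  have hBzbar3_e0 : W ((Tz + Tc3) (e 0)) = 0 := by
    simpa [hTz, hTc3] using hW1 0
  intro h
  have h1 := congrArg (fun T : H →L[ℂ] H => T (e 1)) h
  simp only [ContinuousLinearMap.comp_apply, hBzbar_e1, hBzbar3_e1, map_add, map_smul, hBzbar3_e0,
    smul_zero, add_zero] at h1
  exact he0 (by simpa using h1)

/-- The slant Toeplitz operators `B_{z+z̄³} = W(T_z + T_{z̄³})` and
`B_{z+z̄} = W(T_z + T_{z̄})` on the Bergman space (modeled as a complex
Hilbert space `H` with monomials `e n = z^n`, `⟪z^j, z^k⟫ = δ_{jk}/(j+1)`,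
dense span; `W` the slant operator and `T_z, T_{z̄}, T_{z̄³}` the Toeplitz
operators characterized on monomials) do not commute. -/
theorem slant_toeplitz_z_zbar_cube_not_commute
    {H : Type*} [NormedAddCommGroup H] [InnerProductSpace ℂ H] [CompleteSpace H]
    (e : ℕ → H)
    (he : ∀ j k : ℕ, (inner ℂ (e j) (e k) : ℂ) = if j = k then 1 / ((j : ℂ) + 1) else 0)
    (hdense : (Submodule.span ℂ (Set.range e)).topologicalClosure = ⊤)
    (W : H →L[ℂ] H)
    (hW0 : ∀ n : ℕ, W (e (2 * n)) = e n)
    (hW1 : ∀ n : ℕ, W (e (2 * n + 1)) = 0)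
    (Tz Tc1 Tc3 : H →L[ℂ] H)
    (hTz : ∀ k : ℕ, Tz (e k) = e (k + 1))
    (hTc1 : ∀ k : ℕ, Tc1 (e k)
      = if 1 ≤ k then (((k : ℂ)) / ((k : ℂ) + 1)) • e (k - 1) else 0)
    (hTc3 : ∀ k : ℕ, Tc3 (e k)
      = if 3 ≤ k then (((k : ℂ) - 2) / ((k : ℂ) + 1)) • e (k - 3) else 0) :
    (W.comp (Tz + Tc3)).comp (W.comp (Tz + Tc1))
      ≠ (W.comp (Tz + Tc1)).comp (W.comp (Tz + Tc3)) :=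
  slant_toeplitz_z_zbar_cube_not_commute_general e he W hW0 hW1 Tz Tc1 Tc3 hTz hTc1 hTc3
end

section
/- Let p be an analytic polynomial of degree N ≥ 1 and let φ, ψ be bounded analytic functions on the unit disk. Then the slant Toeplitz operators B_{p̄+φ} and B_{p̄+ψ} on the Bergman space commute if and only if φ = ψ. -/
/-!
Let `E s` be the closed span of the monomials `z ^ r`, `r ≥ s`. The slant operator `W` maps `E s`
into `E ⌈s / 2⌉`, `T_{p̄}` maps it into `E (s - N)`, and an analytic Toeplitz operator whose symbol
vanishes to order `n` at `0` maps it into `E (s + n)`.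

Since `B_{p̄+φ} = B_{p̄+ψ} + W T_{φ-ψ}`, the operators commute iff `D = W T_{φ-ψ}` commutes with
`B = B_{p̄+ψ}`. Suppose the Taylor coefficients `d` of `φ - ψ` vanish below `n` and `d n ≠ 0`, and
let `k = 3n + 2N`. Then `D B z^k ∈ E (n + 1)`, whereas the leading terms of `T_{φ-ψ}` and `T_{p̄}`
survive both halvings: `B D z^k ≡ d n c_N (2n+1)/(2n+N+1) z^n` modulo `E (n + 1)`. Hence
`D B ≠ B D`. Conversely, equal Taylor coefficients give equal Toeplitz operators by density of the
polynomials.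
-/

open scoped InnerProductSpace

theorem SModEq.apply_of_mapsTo {R M M₂ F : Type*} [Ring R] [AddCommGroup M] [Module R M]
    [AddCommGroup M₂] [Module R M₂] [FunLike F M M₂] [LinearMapClass F R M M₂] {f : F}
    {U : Submodule R M} {V : Submodule R M₂} (h : Set.MapsTo f U V) {x y : M}
    (hxy : x ≡ y [SMOD U]) : f x ≡ f y [SMOD V] :=
  SModEq.sub_mem.mpr (by rw [← map_sub]; exact h (SModEq.sub_mem.mp hxy))

theorem coeff_eq_zero_of_hasSum_eq_zero {𝕜 : Type*} [NontriviallyNormedField 𝕜] {a : ℕ → 𝕜}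
    {r : ℝ} (hr : 0 < r) (h : ∀ z ∈ Metric.ball (0 : 𝕜) r, HasSum (fun n => a n * z ^ n) 0) :
    a = 0 := by
  obtain ⟨x, hx0, hxr⟩ := NormedField.exists_norm_lt 𝕜 hr
  set q := FormalMultilinearSeries.ofScalars 𝕜 a
  have hrad : (‖x‖₊ : ENNReal) ≤ q.radius := by
    refine q.le_radius_of_tendsto (l := 0) ?_
    have h0 := (h x (by simpa using hxr)).summable.tendsto_atTop_zero.norm
    simpa [q, FormalMultilinearSeries.ofScalars_norm, norm_mul, norm_pow] using h0
  have hq : HasFPowerSeriesOnBall 0 q 0 ‖x‖₊ := by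
    refine ⟨hrad, by simpa using hx0, fun {y} hy => ?_⟩
    have hyx : ‖y‖ < ‖x‖ := by simpa using hy
    simp only [q, FormalMultilinearSeries.ofScalars_apply_eq, smul_eq_mul, Pi.zero_apply]
    exact h y (by simpa using hyx.trans hxr)
  exact (FormalMultilinearSeries.ofScalars_series_eq_zero 𝕜).mp hq.hasFPowerSeriesAt.eq_zero

theorem eqOn_ball_iff_coeff_eq {𝕜 : Type*} [NontriviallyNormedField 𝕜] {a b : ℕ → 𝕜}
    {f g : 𝕜 → 𝕜} {r : ℝ} (hr : 0 < r)
    (hf : ∀ z ∈ Metric.ball (0 : 𝕜) r, HasSum (fun n => a n * z ^ n) (f z))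
    (hg : ∀ z ∈ Metric.ball (0 : 𝕜) r, HasSum (fun n => b n * z ^ n) (g z)) :
    (∀ z ∈ Metric.ball (0 : 𝕜) r, f z = g z) ↔ a = b := by
  refine ⟨fun hfg => sub_eq_zero.mp (coeff_eq_zero_of_hasSum_eq_zero hr fun z hz => ?_),
    fun hab z hz => (hf z hz).unique (hab ▸ hg z hz)⟩
  simpa [sub_mul, hfg z hz] using (hf z hz).sub (hg z hz)

namespace SlantToeplitz

section TailSpan

variable {R M M₂ : Type*} [Semiring R] [AddCommMonoid M] [Module R M] [TopologicalSpace M]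
  [ContinuousAdd M] [ContinuousConstSMul R M]
  [AddCommMonoid M₂] [Module R M₂] [TopologicalSpace M₂] [ContinuousAdd M₂]
  [ContinuousConstSMul R M₂]

variable (R) in
def tailSpan (e : ℕ → M) (s : ℕ) : Submodule R M :=
  (Submodule.span R (e '' Set.Ici s)).topologicalClosure

theorem tailSpan_anti (e : ℕ → M) : Antitone (tailSpan R e) := fun _ _ h =>
  Submodule.topologicalClosure_mono <|
    Submodule.span_mono (Set.image_mono (Set.Ici_subset_Ici.mpr h))

theorem mem_tailSpan {e : ℕ → M} {s r : ℕ} (h : s ≤ r) : e r ∈ tailSpan R e s :=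
  Submodule.le_topologicalClosure _ (Submodule.subset_span ⟨r, h, rfl⟩)

theorem mapsTo_tailSpan_of_apply_mem (T : M →L[R] M₂) {e : ℕ → M} {f : ℕ → M₂} {s s' : ℕ}
    (h : ∀ r, s ≤ r → T (e r) ∈ tailSpan R f s') :
    Set.MapsTo T (tailSpan R e s) (tailSpan R f s') :=
  Submodule.topologicalClosure_minimal (t := (tailSpan R f s').comap (T : M →ₗ[R] M₂)) _
    (Submodule.span_le.mpr (by rintro _ ⟨r, hr, rfl⟩; exact h r hr))
    ((Submodule.isClosed_topologicalClosure _).preimage T.continuous)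

theorem mem_tailSpan_of_hasSum {e : ℕ → M} {s : ℕ} {f : ℕ → M} {v : M} (hv : HasSum f v)
    (hf : ∀ j, f j ∈ tailSpan R e s) : v ∈ tailSpan R e s :=
  (Submodule.isClosed_topologicalClosure _).mem_of_tendsto hv.tendsto_sum_nat
    (Filter.Eventually.of_forall fun _ => Submodule.sum_mem _ fun j _ => hf j)

theorem mem_tailSpan_of_hasSum_smul {e : ℕ → M} {u : ℕ → R} {n k : ℕ} {v : M}
    (hv : HasSum (fun j => u j • e (j + k)) v) (hu : ∀ j < n, u j = 0) : v ∈ tailSpan R e (n + k) :=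
  mem_tailSpan_of_hasSum hv fun j => by
    by_cases hj : j < n
    · rw [hu j hj, zero_smul]; exact zero_mem _
    · exact Submodule.smul_mem _ _ (mem_tailSpan (by omega))

end TailSpan

section Operators

variable {H : Type*} [NormedAddCommGroup H] [NormedSpace ℂ H] {e : ℕ → H}

structure IsSlant (e : ℕ → H) (W : H →L[ℂ] H) : Prop where
  apply_even : ∀ n, W (e (2 * n)) = e n
  apply_odd : ∀ n, W (e (2 * n + 1)) = 0

def IsAnalyticToeplitz (e : ℕ → H) (u : ℕ → ℂ) (T : H →L[ℂ] H) : Prop :=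
  ∀ k, HasSum (fun n => u n • e (n + k)) (T (e k))

/-- `T_{p̄}` for `p = ∑_{j ≤ N} c j z ^ j`, from the Bergman projection
`P (z̄ ^ j z ^ k) = ((k + 1 - j) / (k + 1)) z ^ (k - j)` for `j ≤ k`, and `0` for `j > k`. -/
def IsConjPolyToeplitz (e : ℕ → H) (N : ℕ) (c : ℕ → ℂ) (T : H →L[ℂ] H) : Prop :=
  ∀ k, T (e k) = ∑ j ∈ Finset.range (N + 1),
    if j ≤ k then (c j * (((k : ℂ) + 1 - (j : ℂ)) / ((k : ℂ) + 1))) • e (k - j) else 0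

variable {W Tp T S : H →L[ℂ] H} {N n : ℕ} {c u : ℕ → ℂ}

theorem IsAnalyticToeplitz.sub {v : ℕ → ℂ} (hT : IsAnalyticToeplitz e u T)
    (hS : IsAnalyticToeplitz e v S) : IsAnalyticToeplitz e (u - v) (T - S) := fun k => by
  simpa only [Pi.sub_apply, sub_smul, sub_apply] using (hT k).sub (hS k)

theorem IsAnalyticToeplitz.unique (hdense : Dense (Submodule.span ℂ (Set.range e) : Set H))
    (hT : IsAnalyticToeplitz e u T) (hS : IsAnalyticToeplitz e u S) : T = S :=
  ContinuousLinearMap.ext_on hdense (by rintro _ ⟨k, rfl⟩; exact (hT k).unique (hS k))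

theorem IsSlant.mapsTo_tailSpan (hW : IsSlant e W) (s : ℕ) :
    Set.MapsTo W (tailSpan ℂ e s) (tailSpan ℂ e ((s + 1) / 2)) :=
  mapsTo_tailSpan_of_apply_mem W fun r hr => by
    obtain ⟨m, rfl | rfl⟩ := Nat.even_or_odd' r
    · rw [hW.apply_even]; exact mem_tailSpan (by omega)
    · rw [hW.apply_odd]; exact zero_mem _

theorem IsConjPolyToeplitz.mapsTo_tailSpan (hT : IsConjPolyToeplitz e N c T) (s : ℕ) :
    Set.MapsTo T (tailSpan ℂ e s) (tailSpan ℂ e (s - N)) :=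
  mapsTo_tailSpan_of_apply_mem T fun r hr => by
    rw [hT r]
    refine Submodule.sum_mem _ fun j hj => ?_
    rw [Finset.mem_range] at hj
    split_ifs
    · exact Submodule.smul_mem _ _ (mem_tailSpan (by omega))
    · exact zero_mem _

theorem IsAnalyticToeplitz.mapsTo_tailSpan (hT : IsAnalyticToeplitz e u T)
    (hu : ∀ j < n, u j = 0) (s : ℕ) : Set.MapsTo T (tailSpan ℂ e s) (tailSpan ℂ e (n + s)) :=
  mapsTo_tailSpan_of_apply_mem T fun r hr =>
    tailSpan_anti e (by omega) (mem_tailSpan_of_hasSum_smul (hT r) hu)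

theorem IsAnalyticToeplitz.mapsTo_tailSpan_self (hT : IsAnalyticToeplitz e u T) (s : ℕ) :
    Set.MapsTo T (tailSpan ℂ e s) (tailSpan ℂ e s) := by
  simpa using hT.mapsTo_tailSpan (n := 0) (fun j hj => absurd hj j.not_lt_zero) s

theorem IsSlant.mapsTo_comp (hW : IsSlant e W) (hS : IsAnalyticToeplitz e u S)
    (hu : ∀ j < n, u j = 0) (s : ℕ) :
    Set.MapsTo (W.comp S) (tailSpan ℂ e s) (tailSpan ℂ e ((n + s + 1) / 2)) := fun _ hv =>
  hW.mapsTo_tailSpan _ (hS.mapsTo_tailSpan hu s hv)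

theorem IsSlant.mapsTo_comp_add (hW : IsSlant e W) (hTp : IsConjPolyToeplitz e N c Tp)
    (hT : IsAnalyticToeplitz e u T) (s : ℕ) :
    Set.MapsTo (W.comp (Tp + T)) (tailSpan ℂ e s) (tailSpan ℂ e ((s - N + 1) / 2)) := fun _ hv =>
  hW.mapsTo_tailSpan _ (add_mem (hTp.mapsTo_tailSpan s hv)
    (tailSpan_anti e (Nat.sub_le s N) (hT.mapsTo_tailSpan_self s hv)))

theorem IsConjPolyToeplitz.apply_smodEq (hT : IsConjPolyToeplitz e N c T) {k : ℕ} (hk : N ≤ k) :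
    T (e k) ≡ (c N * (((k : ℂ) + 1 - N) / ((k : ℂ) + 1))) • e (k - N)
      [SMOD tailSpan ℂ e (k - N + 1)] := by
  rw [hT k, Finset.sum_range_succ, if_pos hk]
  conv_rhs => rw [← zero_add ((c N * _) • e (k - N))]
  refine SModEq.add (SModEq.zero.mpr (Submodule.sum_mem _ fun j hj => ?_)) SModEq.rfl
  rw [Finset.mem_range] at hj
  split_ifs
  · exact Submodule.smul_mem _ _ (mem_tailSpan (by omega))
  · exact zero_mem _

theorem IsAnalyticToeplitz.apply_smodEq (hT : IsAnalyticToeplitz e u T)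
    (hu : ∀ j < n, u j = 0) (k : ℕ) :
    T (e k) ≡ u n • e (n + k) [SMOD tailSpan ℂ e (n + 1 + k)] := by
  refine SModEq.sub_mem.mpr (mem_tailSpan_of_hasSum_smul (u := Function.update u n 0) ?_ ?_)
  · convert (hT k).sub (hasSum_ite_eq n (u n • e (n + k))) using 2 with j
    by_cases hj : j = n
    · subst hj; simp
    · simp [hj]
  · intro j hj
    by_cases hjn : j = n
    · simp [hjn]
    · rw [Function.update_of_ne hjn, hu j (by omega)]

theorem IsSlant.comp_apply_smodEq (hW : IsSlant e W) (hS : IsAnalyticToeplitz e u S)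
    (hu : ∀ j < n, u j = 0) {k m : ℕ} (hk : n + k = 2 * m) :
    (W.comp S) (e k) ≡ u n • e m [SMOD tailSpan ℂ e (m + 1)] := by
  have h := SModEq.apply_of_mapsTo (hW.mapsTo_tailSpan _) (hS.apply_smodEq hu k)
  rw [map_smul, hk, hW.apply_even] at h
  exact h.mono (tailSpan_anti e (by omega))

theorem IsSlant.comp_add_apply_smodEq (hW : IsSlant e W) (hTp : IsConjPolyToeplitz e N c Tp)
    (hT : IsAnalyticToeplitz e u T) (hN : 1 ≤ N) (m : ℕ) :
    (W.comp (Tp + T)) (e (2 * m + N))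
      ≡ (c N * ((2 * m + 1) / (2 * m + N + 1))) • e m [SMOD tailSpan ℂ e (m + 1)] := by
  have hp := SModEq.apply_of_mapsTo (hW.mapsTo_tailSpan _)
    (hTp.apply_smodEq (k := 2 * m + N) (by omega))
  rw [map_smul, show 2 * m + N - N = 2 * m by omega, hW.apply_even,
    show (2 * m + 1 + 1) / 2 = m + 1 by omega] at hp
  have ha : W (T (e (2 * m + N))) ∈ tailSpan ℂ e (m + 1) :=
    tailSpan_anti e (by omega) <|
      hW.mapsTo_tailSpan _ (hT.mapsTo_tailSpan_self _ (mem_tailSpan le_rfl))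
  convert hp.add (SModEq.zero.mpr ha) using 1
  · simp
  · rw [add_zero]
    push_cast
    ring_nf

end Operators

section Commutator

variable {H : Type*} [NormedAddCommGroup H] [InnerProductSpace ℂ H] {e : ℕ → H}

theorem inner_eq_zero_of_mem_tailSpan (horth : Pairwise fun j k => ⟪e j, e k⟫_ℂ = 0) {m s : ℕ}
    (hms : m < s) {v : H} (hv : v ∈ tailSpan ℂ e s) : ⟪e m, v⟫_ℂ = 0 := by
  have hker : tailSpan ℂ e s ≤ LinearMap.ker (innerSL ℂ (e m) : H →ₗ[ℂ] ℂ) :=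
    Submodule.topologicalClosure_minimal _
      (Submodule.span_le.mpr (by
        rintro _ ⟨r, hr, rfl⟩
        exact horth (show m ≠ r by rw [Set.mem_Ici] at hr; omega)))
      (innerSL ℂ (e m)).isClosed_ker
  exact hker hv

theorem inner_eq_of_smodEq (horth : Pairwise fun j k => ⟪e j, e k⟫_ℂ = 0) {m : ℕ} {x y : H}
    (h : x ≡ y [SMOD tailSpan ℂ e (m + 1)]) : ⟪e m, x⟫_ℂ = ⟪e m, y⟫_ℂ := by
  rw [← sub_eq_zero, ← inner_sub_right]
  exact inner_eq_zero_of_mem_tailSpan horth (lt_add_one m) (SModEq.sub_mem.mp h)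

variable {W Tp T S : H →L[ℂ] H} {N n : ℕ} {c u d : ℕ → ℂ}

theorem slantToeplitz_comp_ne_comp (horth : Pairwise fun j k => ⟪e j, e k⟫_ℂ = 0)
    (hne : ∀ j, e j ≠ 0) (hW : IsSlant e W) (hN : 1 ≤ N) (hcN : c N ≠ 0)
    (hTp : IsConjPolyToeplitz e N c Tp)
    (hT : IsAnalyticToeplitz e u T) (hS : IsAnalyticToeplitz e d S) (hd : ∀ j < n, d j = 0)
    (hdn : d n ≠ 0) :
    (W.comp S).comp (W.comp (Tp + T)) ≠ (W.comp (Tp + T)).comp (W.comp S) := by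
  -- `W` halves `z ^ (n + k)` to `z ^ (2n + N)`, where `W T_{p̄}` has leading term `z ^ n`.
  set k := 3 * n + 2 * N
  set C : ℂ := c N * ((2 * n + 1) / (2 * n + N + 1))
  have hlow : ⟪e n, (W.comp S) ((W.comp (Tp + T)) (e k))⟫_ℂ = 0 := by
    have hmem := hW.mapsTo_comp hS hd _ (hW.mapsTo_comp_add hTp hT _ (mem_tailSpan (le_refl k)))
    exact inner_eq_zero_of_mem_tailSpan horth (by omega) hmem
  have hlead :
      (W.comp (Tp + T)) ((W.comp S) (e k)) ≡ (d n * C) • e n [SMOD tailSpan ℂ e (n + 1)] := by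
    have h := SModEq.apply_of_mapsTo (hW.mapsTo_comp_add hTp hT _)
      (hW.comp_apply_smodEq hS hd (k := k) (m := 2 * n + N) (by omega))
    rw [map_smul, show (2 * n + N + 1 - N + 1) / 2 = n + 1 by omega] at h
    rw [mul_smul]
    exact h.trans ((hW.comp_add_apply_smodEq hTp hT hN n).smul (d n))
  have hC : C ≠ 0 := by
    refine mul_ne_zero hcN (div_ne_zero ?_ ?_) <;> norm_cast
  intro h
  rw [← ContinuousLinearMap.comp_apply, h, ContinuousLinearMap.comp_apply,
    inner_eq_of_smodEq horth hlead, inner_smul_right] at hlow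
  exact mul_ne_zero (mul_ne_zero hdn hC) (inner_self_ne_zero.mpr (hne n)) hlow

theorem slantToeplitz_comm_iff_coeff_eq (horth : Pairwise fun j k => ⟪e j, e k⟫_ℂ = 0)
    (hne : ∀ j, e j ≠ 0) (hdense : Dense (Submodule.span ℂ (Set.range e) : Set H))
    (hW : IsSlant e W) (hN : 1 ≤ N) (hcN : c N ≠ 0) (hTp : IsConjPolyToeplitz e N c Tp)
    {a b : ℕ → ℂ} {Tφ Tψ : H →L[ℂ] H} (hTφ : IsAnalyticToeplitz e a Tφ)
    (hTψ : IsAnalyticToeplitz e b Tψ) :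
    (W.comp (Tp + Tφ)).comp (W.comp (Tp + Tψ)) = (W.comp (Tp + Tψ)).comp (W.comp (Tp + Tφ))
      ↔ a = b := by
  refine ⟨fun hcomm => ?_, fun hab => by rw [hTφ.unique hdense (hab ▸ hTψ)]⟩
  by_contra hab
  have hex : ∃ n, (a - b) n ≠ 0 := by
    by_contra! h
    exact hab (sub_eq_zero.mp (funext h))
  set B := W.comp (Tp + Tψ)
  set D := W.comp (Tφ - Tψ)
  have hsplit : W.comp (Tp + Tφ) = B + D := by
    rw [← ContinuousLinearMap.comp_add, add_add_sub_cancel]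
  rw [hsplit, ContinuousLinearMap.add_comp, ContinuousLinearMap.comp_add, add_right_inj] at hcomm
  exact slantToeplitz_comp_ne_comp horth hne hW hN hcN hTp hTψ (hTφ.sub hTψ)
    (fun j hj => not_not.mp (Nat.find_min hex hj)) (Nat.find_spec hex) hcomm

end Commutator

end SlantToeplitz

theorem commuting_slant_toeplitz_harmonic_general
    {H : Type*} [NormedAddCommGroup H] [InnerProductSpace ℂ H]
    (e : ℕ → H)
    (he : ∀ j k : ℕ, (inner ℂ (e j) (e k) : ℂ) = if j = k then 1 / ((j : ℂ) + 1) else 0)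
    (hdense : (Submodule.span ℂ (Set.range e)).topologicalClosure = ⊤)
    (W : H →L[ℂ] H)
    (hW0 : ∀ n : ℕ, W (e (2 * n)) = e n)
    (hW1 : ∀ n : ℕ, W (e (2 * n + 1)) = 0)
    (N : ℕ) (hN : 1 ≤ N) (c : ℕ → ℂ) (hcN : c N ≠ 0)
    (φ ψ : ℂ → ℂ) (a b : ℕ → ℂ)
    (hφ : ∀ z ∈ Metric.ball (0 : ℂ) 1, HasSum (fun n : ℕ => a n * z ^ n) (φ z))
    (hψ : ∀ z ∈ Metric.ball (0 : ℂ) 1, HasSum (fun n : ℕ => b n * z ^ n) (ψ z))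
    (Tp Tφ Tψ : H →L[ℂ] H)
    (hTp : ∀ k : ℕ, Tp (e k) = ∑ j ∈ Finset.range (N + 1),
      (if j ≤ k then
        (c j * (((k : ℂ) + 1 - (j : ℂ)) / ((k : ℂ) + 1))) • e (k - j) else 0))
    (hTφ : ∀ k : ℕ, HasSum (fun n : ℕ => a n • e (n + k)) (Tφ (e k)))
    (hTψ : ∀ k : ℕ, HasSum (fun n : ℕ => b n • e (n + k)) (Tψ (e k))) :
    (W.comp (Tp + Tφ)).comp (W.comp (Tp + Tψ))
        = (W.comp (Tp + Tψ)).comp (W.comp (Tp + Tφ))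
      ↔ ∀ z ∈ Metric.ball (0 : ℂ) 1, φ z = ψ z := by
  have horth : Pairwise fun j k => ⟪e j, e k⟫_ℂ = 0 := fun j k hjk => (he j k).trans (if_neg hjk)
  have hne : ∀ j, e j ≠ 0 := fun j hj => Nat.cast_add_one_ne_zero (R := ℂ) j <| by
    simpa [hj] using (he j j).symm.trans (inner_self_eq_zero.mpr hj)
  have hdense' := Submodule.dense_iff_topologicalClosure_eq_top.mpr hdense
  rw [SlantToeplitz.slantToeplitz_comm_iff_coeff_eq horth hne hdense' ⟨hW0, hW1⟩ hN hcN hTp hTφ hTψ,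
    eqOn_ball_iff_coeff_eq one_pos hφ hψ]

/-- Main theorem: let `p(z) = Σ_{j=0}^N c_j z^j` be an analytic polynomial of
degree `N ≥ 1` (so `c N ≠ 0`) and `φ, ψ` bounded analytic functions on the
unit disk with Taylor coefficients `a`, `b`.  On the Bergman space (modeled as
a complex Hilbert space `H` with monomials `e n = z^n`,
`⟪z^j, z^k⟫ = δ_{jk}/(j+1)`, dense span), with slant operator `W` and Toeplitz
operators `Tp = T_{p̄}`, `Tφ = T_φ`, `Tψ = T_ψ` characterized on monomials,
the slant Toeplitz operators `B_{p̄+φ} = W(T_{p̄} + T_φ)` and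
`B_{p̄+ψ} = W(T_{p̄} + T_ψ)` commute if and only if `φ = ψ`. -/
theorem commuting_slant_toeplitz_harmonic
    {H : Type*} [NormedAddCommGroup H] [InnerProductSpace ℂ H] [CompleteSpace H]
    (e : ℕ → H)
    (he : ∀ j k : ℕ, (inner ℂ (e j) (e k) : ℂ) = if j = k then 1 / ((j : ℂ) + 1) else 0)
    (hdense : (Submodule.span ℂ (Set.range e)).topologicalClosure = ⊤)
    (W : H →L[ℂ] H)
    (hW0 : ∀ n : ℕ, W (e (2 * n)) = e n)
    (hW1 : ∀ n : ℕ, W (e (2 * n + 1)) = 0)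
    (N : ℕ) (hN : 1 ≤ N) (c : ℕ → ℂ) (hcN : c N ≠ 0)
    (φ ψ : ℂ → ℂ) (a b : ℕ → ℂ) (Cφ Cψ : ℝ)
    (hφ : ∀ z ∈ Metric.ball (0 : ℂ) 1, HasSum (fun n : ℕ => a n * z ^ n) (φ z))
    (hψ : ∀ z ∈ Metric.ball (0 : ℂ) 1, HasSum (fun n : ℕ => b n * z ^ n) (ψ z))
    (hφbd : ∀ z ∈ Metric.ball (0 : ℂ) 1, ‖φ z‖ ≤ Cφ)
    (hψbd : ∀ z ∈ Metric.ball (0 : ℂ) 1, ‖ψ z‖ ≤ Cψ)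
    (Tp Tφ Tψ : H →L[ℂ] H)
    (hTp : ∀ k : ℕ, Tp (e k) = ∑ j ∈ Finset.range (N + 1),
      (if j ≤ k then
        (c j * (((k : ℂ) + 1 - (j : ℂ)) / ((k : ℂ) + 1))) • e (k - j) else 0))
    (hTφ : ∀ k : ℕ, HasSum (fun n : ℕ => a n • e (n + k)) (Tφ (e k)))
    (hTψ : ∀ k : ℕ, HasSum (fun n : ℕ => b n • e (n + k)) (Tψ (e k))) :
    (W.comp (Tp + Tφ)).comp (W.comp (Tp + Tψ))
        = (W.comp (Tp + Tψ)).comp (W.comp (Tp + Tφ))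
      ↔ ∀ z ∈ Metric.ball (0 : ℂ) 1, φ z = ψ z :=
  commuting_slant_toeplitz_harmonic_general e he hdense W hW0 hW1 N hN c hcN φ ψ a b hφ hψ Tp Tφ Tψ
    hTp hTφ hTψ
end
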